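/- Under the hypothesis that M · Σ_{(x,y)∈Π} |y|^{-1/(a,b)} < 1/2 (where M = sup |α'|/α² and |y|^{-1/(a,b)} = max{|y|^{-1/a}(1+|log|y||), |y|^{-1/b}(1+|log|y||)}), the operator K(f)(t) = a₀ + Σ_{(x,y)∈Π} 1_{(t₀,t]}(x) y^⟨−1/α(f(x₋))⟩ is a contraction on (D[t₀,t₁), ‖·‖_∞) with constant 1/2, i.e. ‖K(f) − K(g)‖_∞ ≤ (1/2)‖f − g‖_∞ for all f, g ∈ D[t₀,t₁). -/

import Mathlib

open MeasureTheory Filter Set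

noncomputable def spow (r s : ℝ) : ℝ := Real.sign r * |r| ^ s

noncomputable def wab (a b y : ℝ) : ℝ :=
  max (|y| ^ (-1 / a) * (1 + abs (Real.log (abs y)))) (|y| ^ (-1 / b) * (1 + abs (Real.log (abs y))))

noncomputable def Mconst (α : ℝ → ℝ) : ℝ := ⨆ ξ : ℝ, |deriv α ξ| / (α ξ) ^ 2

/-- Càdlàg on `[t₀,t₁)`: right-continuous on `[t₀,t₁)` and left limits exist on `(t₀,t₁]`. -/
def CadlagOn (f : ℝ → ℝ) (t₀ t₁ : ℝ) : Prop :=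
  (∀ u ∈ Set.Ico t₀ t₁, Filter.Tendsto f (nhdsWithin u (Set.Ioi u)) (nhds (f u))) ∧
  (∀ u ∈ Set.Ioc t₀ t₁, ∃ L, Filter.Tendsto f (nhdsWithin u (Set.Iio u)) (nhds L))

/-- The sum `∑_{(x,y)∈Λ} 1_{(t₀,t]}(x) y^⟨-1/α(f(x₋))⟩`. -/
noncomputable def jumpSum (α : ℝ → ℝ) (Λ : Set (ℝ × ℝ)) (t₀ t : ℝ) (f : ℝ → ℝ) : ℝ :=
  ∑' p : Λ, if (p : ℝ × ℝ).1 ∈ Set.Ioc t₀ t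
    then spow (p : ℝ × ℝ).2 (-1 / α (Function.leftLim f (p : ℝ × ℝ).1)) else 0

/-- The truncated sum over points with `|y| ≤ n`. -/
noncomputable def jumpSumTrunc (α : ℝ → ℝ) (Λ : Set (ℝ × ℝ)) (n : ℝ) (t₀ t : ℝ) (f : ℝ → ℝ) : ℝ :=
  ∑' p : Λ, if |(p : ℝ × ℝ).2| ≤ n ∧ (p : ℝ × ℝ).1 ∈ Set.Ioc t₀ t
    then spow (p : ℝ × ℝ).2 (-1 / α (Function.leftLim f (p : ℝ × ℝ).1)) else 0


/-!
For `y ≠ 0` the map `s ↦ y^⟨s⟩` has derivative `sign y · |y|^s · log |y|`, which for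
`s ∈ [-1/a, -1/b]` is bounded by the weight `|y|^{-1/(a,b)}`, while `ξ ↦ 1/α ξ` is `M`-Lipschitz.
So the jump of `K f - K g` at `(x, y) ∈ Λ` is at most `M |y|^{-1/(a,b)} |f(x₋) - g(x₋)|`, and
`|f(x₋) - g(x₋)| ≤ ‖f - g‖_∞`; summing over `Λ` gives the factor `M Σ |y|^{-1/(a,b)} < 1/2`.
The weights are summable since `|y|^{-1/b} (1 + log |y|) = O(|y|^{-1/b'})` as `|y| → ∞`.
A càdlàg function is bounded on `[t₀, t₁)` by compactness of `[t₀, t₁]`, so the real suprema in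
the statement are not the junk value `0` of an unbounded `⨆`.
-/

open Topology

lemma abs_spow_le (r s : ℝ) : |spow r s| ≤ |r| ^ s := by
  rcases Real.sign_apply_eq r with h | h | h <;>
    simp [spow, h, abs_of_nonneg, Real.rpow_nonneg (abs_nonneg r) s]

lemma wab_nonneg (a b y : ℝ) : 0 ≤ wab a b y :=
  le_max_of_le_left (by positivity)

lemma neg_one_div_mem_Icc {a b c : ℝ} (ha : 0 < a) (hc : c ∈ Icc a b) :
    -1 / c ∈ Icc (-1 / a) (-1 / b) := by
  simp only [neg_div, mem_Icc, neg_le_neg_iff]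
  exact ⟨one_div_le_one_div_of_le ha hc.1, one_div_le_one_div_of_le (ha.trans_le hc.1) hc.2⟩

lemma rpow_mul_one_add_abs_log_le_wab {a b s : ℝ} (hb : 0 < b)
    (hs : s ∈ Icc (-1 / a) (-1 / b)) (y : ℝ) :
    |y| ^ s * (1 + |(Real.log |y|)|) ≤ wab a b y := by
  rcases eq_or_ne y 0 with rfl | hy
  · have hs0 : s ≠ 0 := (hs.2.trans_lt (by simp [neg_div, hb])).ne
    simpa [Real.zero_rpow hs0] using wab_nonneg a b 0
  have hy' : 0 < |y| := abs_pos.2 hy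
  rw [wab, ← max_mul_of_nonneg _ _ (by positivity)]
  gcongr
  rcases le_or_gt 1 |y| with h1 | h1
  · exact le_max_of_le_right (Real.rpow_le_rpow_of_exponent_le h1 hs.2)
  · exact le_max_of_le_left (Real.rpow_le_rpow_of_exponent_ge hy' h1.le hs.1)

lemma abs_spow_le_wab {a b c : ℝ} (ha : 0 < a) (hc : c ∈ Icc a b) (y : ℝ) :
    |spow y (-1 / c)| ≤ wab a b y :=
  calc |spow y (-1 / c)| ≤ |y| ^ (-1 / c) := abs_spow_le _ _
    _ ≤ |y| ^ (-1 / c) * (1 + |(Real.log |y|)|) :=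
      le_mul_of_one_le_right (by positivity) (by simp)
    _ ≤ wab a b y := rpow_mul_one_add_abs_log_le_wab (ha.trans_le (hc.1.trans hc.2))
      (neg_one_div_mem_Icc ha hc) y

lemma abs_spow_sub_spow_le {a b s₁ s₂ : ℝ} (hb : 0 < b) (y : ℝ)
    (hs₁ : s₁ ∈ Icc (-1 / a) (-1 / b)) (hs₂ : s₂ ∈ Icc (-1 / a) (-1 / b)) :
    |spow y s₁ - spow y s₂| ≤ wab a b y * |s₁ - s₂| := by
  rcases eq_or_ne y 0 with rfl | hy
  · simpa [spow] using mul_nonneg (wab_nonneg a b 0) (abs_nonneg (s₁ - s₂))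
  have hderiv (s : ℝ) : HasDerivAt (spow y) (Real.sign y * (|y| ^ s * Real.log |y|)) s :=
    ((Real.hasStrictDerivAt_const_rpow (abs_pos.2 hy) s).hasDerivAt).const_mul _
  have hbound : ∀ s ∈ Icc (-1 / a) (-1 / b),
      ‖Real.sign y * (|y| ^ s * Real.log |y|)‖ ≤ wab a b y := fun s hs =>
    calc ‖Real.sign y * (|y| ^ s * Real.log |y|)‖ ≤ |y| ^ s * (1 + |(Real.log |y|)|) := by
          have hsign : |Real.sign y| ≤ 1 := by
            rcases Real.sign_apply_eq y with h | h | h <;> simp [h]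
          rw [Real.norm_eq_abs, abs_mul, abs_mul, abs_of_pos (by positivity : 0 < |y| ^ s)]
          calc _ ≤ 1 * (|y| ^ s * |(Real.log |y|)|) := by gcongr
            _ ≤ _ := by rw [one_mul, mul_one_add]; linarith [Real.rpow_nonneg (abs_nonneg y) s]
      _ ≤ wab a b y := rpow_mul_one_add_abs_log_le_wab hb hs y
  exact (convex_Icc _ _).norm_image_sub_le_of_norm_hasDerivWithin_le
    (fun s _ => (hderiv s).hasDerivWithinAt) hbound hs₂ hs₁

lemma abs_inv_sub_inv_le {α : ℝ → ℝ} {M : ℝ} (hα : Differentiable ℝ α) (hpos : ∀ x, 0 < α x)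
    (hM : ∀ ξ, |deriv α ξ| / α ξ ^ 2 ≤ M) (u v : ℝ) :
    |(α u)⁻¹ - (α v)⁻¹| ≤ M * |u - v| := by
  have hderiv (x : ℝ) : HasDerivAt (fun x => (α x)⁻¹) (-deriv α x / α x ^ 2) x :=
    (hα x).hasDerivAt.inv (hpos x).ne'
  refine convex_univ.norm_image_sub_le_of_norm_hasDerivWithin_le
    (fun x _ => (hderiv x).hasDerivWithinAt) (fun x _ => ?_) (mem_univ v) (mem_univ u)
  simpa [Real.norm_eq_abs, abs_div, neg_div] using hM x

lemma abs_spow_sub_spow_le_mul {a b M : ℝ} {α : ℝ → ℝ} (ha : 0 < a) (hab : a ≤ b)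
    (hrange : ∀ x, α x ∈ Icc a b) (hα : Differentiable ℝ α)
    (hM : ∀ ξ, |deriv α ξ| / α ξ ^ 2 ≤ M) (y u v : ℝ) :
    |spow y (-1 / α u) - spow y (-1 / α v)| ≤ M * wab a b y * |u - v| :=
  calc |spow y (-1 / α u) - spow y (-1 / α v)| ≤ wab a b y * |-1 / α u - -1 / α v| :=
        abs_spow_sub_spow_le (ha.trans_le hab) y (neg_one_div_mem_Icc ha (hrange u))
          (neg_one_div_mem_Icc ha (hrange v))
    _ = wab a b y * |(α u)⁻¹ - (α v)⁻¹| := by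
        rw [neg_div, neg_div, neg_sub_neg, abs_sub_comm, one_div, one_div]
    _ ≤ wab a b y * (M * |u - v|) := by
        gcongr
        · exact wab_nonneg a b y
        exact abs_inv_sub_inv_le hα (fun x => ha.trans_le (hrange x).1) hM u v
    _ = M * wab a b y * |u - v| := by ring

lemma rpow_mul_one_add_log_le {x e e' : ℝ} (hx : 1 ≤ x) (he : e < e') :
    x ^ e * (1 + Real.log x) ≤ (1 + 1 / (e' - e)) * x ^ e' := by
  have hδ : 0 < e' - e := sub_pos.2 he
  have hx0 : 0 < x := one_pos.trans_le hx
  have hlog : Real.log x ≤ x ^ (e' - e) / (e' - e) := Real.log_le_rpow_div hx0.le hδ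
  have hone : 1 ≤ x ^ (e' - e) := Real.one_le_rpow hx hδ.le
  calc x ^ e * (1 + Real.log x) ≤ x ^ e * ((1 + 1 / (e' - e)) * x ^ (e' - e)) := by
        gcongr
        rw [add_mul, one_mul, one_div_mul_eq_div]
        linarith
    _ = (1 + 1 / (e' - e)) * x ^ e' := by
        rw [mul_left_comm, ← Real.rpow_add hx0, add_sub_cancel]

lemma exists_wab_le_mul_rpow {a b b' : ℝ} (ha : 0 < a) (hab : a ≤ b) (hbb' : b < b') :
    ∃ C, ∀ y, 1 ≤ |y| → wab a b y ≤ C * |y| ^ (-1 / b') := by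
  have hb : 0 < b := ha.trans_le hab
  have hexp : -1 / b < -1 / b' := by
    simpa [neg_div] using one_div_lt_one_div_of_lt hb hbb'
  have hexp' : -1 / a ≤ -1 / b := by simpa [neg_div] using one_div_le_one_div_of_le ha hab
  refine ⟨1 + 1 / (-1 / b' - -1 / b), fun y hy => ?_⟩
  have hlog : |(Real.log |y|)| = Real.log |y| := abs_of_nonneg (Real.log_nonneg hy)
  have hmain := rpow_mul_one_add_log_le hy hexp
  unfold wab
  rw [hlog]
  refine max_le (le_trans ?_ hmain) hmain
  exact mul_le_mul_of_nonneg_right (Real.rpow_le_rpow_of_exponent_le hy hexp')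
    (by linarith [Real.log_nonneg hy])

lemma wab_zero {a b : ℝ} (ha : a ≠ 0) (hb : b ≠ 0) : wab a b 0 = 0 := by
  simp [wab, Real.zero_rpow, ha, hb]

lemma summable_wab_of_summable_rpow {ι : Type*} {a b b' : ℝ} {u : ι → ℝ} (ha : 0 < a)
    (hab : a ≤ b) (hbb' : b < b') (hu : Summable fun i => |u i| ^ (-1 / b')) :
    Summable fun i => wab a b (u i) := by
  obtain ⟨C, hC⟩ := exists_wab_le_mul_rpow ha hab hbb'
  have hb' : 0 < b' := ha.trans_le hab |>.trans hbb'
  refine (hu.mul_left C).of_norm_bounded_eventually ?_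
  filter_upwards [hu.tendsto_cofinite_zero.eventually (gt_mem_nhds one_pos)] with i hi
  rw [Real.norm_eq_abs, abs_of_nonneg (wab_nonneg _ _ _)]
  rcases eq_or_ne (u i) 0 with h0 | h0
  · simp [h0, wab_zero ha.ne' (ha.trans_le hab).ne', Real.zero_rpow, hb'.ne']
  -- `|u i| ^ (-1 / b') < 1` forces `1 ≤ |u i|`, the regime where `wab` is dominated.
  refine hC _ (le_of_not_gt fun hlt => hi.not_ge ?_)
  exact Real.one_le_rpow_of_pos_of_le_one_of_nonpos (abs_pos.2 h0) hlt.le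
    (by simp [neg_div, hb'.le])

lemma abs_deriv_div_sq_le_Mconst {a b : ℝ} {α : ℝ → ℝ} (ha : 0 < a)
    (hrange : ∀ x, α x ∈ Icc a b) (hbd : ∃ C, ∀ x, |deriv α x| ≤ C) (ξ : ℝ) :
    |deriv α ξ| / α ξ ^ 2 ≤ Mconst α := by
  obtain ⟨C, hC⟩ := hbd
  refine le_ciSup (f := fun ξ => |deriv α ξ| / α ξ ^ 2) ⟨C / a ^ 2, ?_⟩ ξ
  rintro _ ⟨x, rfl⟩
  exact div_le_div₀ ((abs_nonneg _).trans (hC x)) (hC x) (by positivity)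
    (pow_le_pow_left₀ ha.le (hrange x).1 2)

lemma IsCompact.bddAbove_image_inter {X : Type*} [TopologicalSpace X] {K s : Set X}
    {u : X → ℝ} (hK : IsCompact K) (h : ∀ x ∈ K, IsBoundedUnder (· ≤ ·) (𝓝[s] x) u) :
    BddAbove (u '' (K ∩ s)) := by
  refine hK.induction_on (p := fun t => BddAbove (u '' (t ∩ s))) (by simp)
    (fun t t' htt' ht' => ht'.mono (image_mono (inter_subset_inter_left s htt')))
    (fun t t' ht ht' => by rw [union_inter_distrib_right, image_union]; exact ht.union ht')
    (fun x hx => ?_)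
  obtain ⟨C, hC⟩ := h x hx
  refine ⟨{y | y ∈ s → u y ≤ C}, mem_nhdsWithin_of_mem_nhds (mem_inf_principal.1 hC), C, ?_⟩
  rintro _ ⟨y, ⟨hy, hys⟩, rfl⟩
  exact hy hys

lemma CadlagOn.sub {f g : ℝ → ℝ} {t₀ t₁ : ℝ} (hf : CadlagOn f t₀ t₁) (hg : CadlagOn g t₀ t₁) :
    CadlagOn (f - g) t₀ t₁ := by
  refine ⟨fun u hu => (hf.1 u hu).sub (hg.1 u hu), fun u hu => ?_⟩
  obtain ⟨L, hL⟩ := hf.2 u hu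
  obtain ⟨L', hL'⟩ := hg.2 u hu
  exact ⟨L - L', hL.sub hL'⟩

lemma CadlagOn.isBoundedUnder_abs {f : ℝ → ℝ} {t₀ t₁ x : ℝ} (hf : CadlagOn f t₀ t₁)
    (hx : x ∈ Icc t₀ t₁) : IsBoundedUnder (· ≤ ·) (𝓝[Ico t₀ t₁] x) fun t => |f t| := by
  rw [← inter_univ (Ico t₀ t₁), ← Iio_union_Ici (a := x), inter_union_distrib_left,
    nhdsWithin_union, IsBoundedUnder, map_sup]
  refine isBounded_sup ?_ ?_
  · rcases hx.1.eq_or_lt with rfl | hx₀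
    · rw [Ico_inter_Iio, Ico_eq_empty (by simp), nhdsWithin_empty, map_bot]
      exact isBounded_bot.2 ⟨0⟩
    obtain ⟨L, hL⟩ := hf.2 x ⟨hx₀, hx.2⟩
    exact hL.abs.isBoundedUnder_le.mono (nhdsWithin_mono _ inter_subset_right)
  · rcases hx.2.eq_or_lt with rfl | hx₁
    · rw [Ico_inter_Ici, Ico_eq_empty (by simp), nhdsWithin_empty, map_bot]
      exact isBounded_bot.2 ⟨0⟩
    have hright : ContinuousWithinAt f (Ici x) x :=
      continuousWithinAt_Ioi_iff_Ici.1 (hf.1 x ⟨hx.1, hx₁⟩)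
    exact hright.tendsto.abs.isBoundedUnder_le.mono (nhdsWithin_mono _ inter_subset_right)

lemma CadlagOn.bddAbove_range_abs {f : ℝ → ℝ} {t₀ t₁ : ℝ} (hf : CadlagOn f t₀ t₁) :
    BddAbove (range fun t : Ico t₀ t₁ => |f t|) := by
  have := isCompact_Icc.bddAbove_image_inter fun x hx => hf.isBoundedUnder_abs hx
  rwa [inter_eq_right.2 Ico_subset_Icc_self, image_eq_range] at this

lemma CadlagOn.abs_leftLim_sub_le {f g : ℝ → ℝ} {t₀ t₁ x S : ℝ} (hf : CadlagOn f t₀ t₁)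
    (hg : CadlagOn g t₀ t₁) (hS : ∀ t ∈ Ico t₀ t₁, |f t - g t| ≤ S) (hx : x ∈ Ioc t₀ t₁) :
    |Function.leftLim f x - Function.leftLim g x| ≤ S := by
  obtain ⟨L, hL⟩ := hf.2 x hx
  obtain ⟨L', hL'⟩ := hg.2 x hx
  rw [leftLim_eq_of_tendsto hL, leftLim_eq_of_tendsto hL']
  refine le_of_tendsto (hL.sub hL').abs ?_
  filter_upwards [Ioo_mem_nhdsLT hx.1] with t ht
  exact hS t ⟨ht.1.le, ht.2.trans_le hx.2⟩

lemma abs_jumpSum_sub_le {a b M S t₀ t : ℝ} {α f g : ℝ → ℝ} {Λ : Set (ℝ × ℝ)} (ha : 0 < a)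
    (hab : a ≤ b) (hrange : ∀ x, α x ∈ Icc a b) (hα : Differentiable ℝ α)
    (hM : ∀ ξ, |deriv α ξ| / α ξ ^ 2 ≤ M) (hw : Summable fun p : Λ => wab a b (p : ℝ × ℝ).2)
    (hS : 0 ≤ S) (hfg : ∀ x ∈ Ioc t₀ t, |Function.leftLim f x - Function.leftLim g x| ≤ S) :
    |jumpSum α Λ t₀ t f - jumpSum α Λ t₀ t g| ≤ M * (∑' p : Λ, wab a b (p : ℝ × ℝ).2) * S := by
  have hsummable (h : ℝ → ℝ) : Summable fun p : Λ => if (p : ℝ × ℝ).1 ∈ Ioc t₀ t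
      then spow (p : ℝ × ℝ).2 (-1 / α (Function.leftLim h (p : ℝ × ℝ).1)) else 0 := by
    refine .of_norm_bounded hw fun p => ?_
    split_ifs
    · exact abs_spow_le_wab ha (hrange _) _
    · simpa using wab_nonneg a b _
  have hM0 : 0 ≤ M := (div_nonneg (abs_nonneg _) (sq_nonneg _)).trans (hM 0)
  rw [jumpSum, jumpSum, ← (hsummable f).tsum_sub (hsummable g), ← tsum_mul_left,
    ← tsum_mul_right]
  refine tsum_of_norm_bounded (E := ℝ) ((hw.mul_left M).mul_right S).hasSum fun p => ?_
  split_ifs with hp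
  · refine (abs_spow_sub_spow_le_mul ha hab hrange hα hM _ _ _).trans ?_
    have := wab_nonneg a b (p : ℝ × ℝ).2
    gcongr
    exact hfg _ hp
  · simpa using mul_nonneg (mul_nonneg hM0 (wab_nonneg a b _)) hS

theorem stmt3_general (a b b' t₀ t₁ a₀ : ℝ) (ha : 0 < a) (hab : a < b) (hbb' : b < b')
    (α : ℝ → ℝ) (hrange : ∀ x, α x ∈ Set.Icc a b) (hsmooth : ContDiff ℝ 1 α)
    (hbd : ∃ C, ∀ x, |deriv α x| ≤ C)
    (Λ : Set (ℝ × ℝ))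
    (hΛ : Summable fun p : Λ => |(p : ℝ × ℝ).2| ^ (-1 / b'))
    (hcontr : Mconst α * (∑' p : Λ, wab a b (p : ℝ × ℝ).2) < 1 / 2)
    (f g : ℝ → ℝ) (hf : CadlagOn f t₀ t₁) (hg : CadlagOn g t₀ t₁) :
    (⨆ t : Set.Ico t₀ t₁, |(a₀ + jumpSum α Λ t₀ (t : ℝ) f) - (a₀ + jumpSum α Λ t₀ (t : ℝ) g)|)
      ≤ (1 / 2) * ⨆ t : Set.Ico t₀ t₁, |f (t : ℝ) - g (t : ℝ)| := by
  set S := ⨆ t : Set.Ico t₀ t₁, |f (t : ℝ) - g (t : ℝ)|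
  have hS0 : 0 ≤ S := Real.iSup_nonneg fun _ => abs_nonneg _
  have hS : ∀ t ∈ Ico t₀ t₁, |f t - g t| ≤ S := fun t ht =>
    le_ciSup (hf.sub hg).bddAbove_range_abs (⟨t, ht⟩ : Ico t₀ t₁)
  have hw := summable_wab_of_summable_rpow ha hab.le hbb' hΛ
  refine Real.iSup_le (fun t => ?_) (by positivity)
  rw [add_sub_add_left_eq_sub]
  calc _ ≤ Mconst α * (∑' p : Λ, wab a b (p : ℝ × ℝ).2) * S :=
        abs_jumpSum_sub_le ha hab.le hrange (hsmooth.differentiable one_ne_zero)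
          (abs_deriv_div_sq_le_Mconst ha hrange hbd) hw hS0 fun x hx =>
            hf.abs_leftLim_sub_le hg hS ⟨hx.1, (hx.2.trans_lt t.2.2).le⟩
    _ ≤ 1 / 2 * S := by gcongr

/-- Under the smallness condition, K is a (1/2)-contraction in the supremum norm. -/
theorem stmt3 (a b b' t₀ t₁ a₀ : ℝ) (ha : 0 < a) (hab : a < b) (hbb' : b < b') (hb1 : b' < 1)
    (ht : t₀ < t₁)
    (α : ℝ → ℝ) (hrange : ∀ x, α x ∈ Set.Icc a b) (hsmooth : ContDiff ℝ 1 α)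
    (hbd : ∃ C, ∀ x, |deriv α x| ≤ C)
    (Λ : Set (ℝ × ℝ)) (hcount : Λ.Countable)
    (hsubΛ : Λ ⊆ Set.Ioo t₀ t₁ ×ˢ (Set.univ : Set ℝ))
    (hΛ : Summable fun p : Λ => |(p : ℝ × ℝ).2| ^ (-1 / b'))
    (hcontr : Mconst α * (∑' p : Λ, wab a b (p : ℝ × ℝ).2) < 1 / 2)
    (f g : ℝ → ℝ) (hf : CadlagOn f t₀ t₁) (hg : CadlagOn g t₀ t₁) :
    (⨆ t : Set.Ico t₀ t₁, |(a₀ + jumpSum α Λ t₀ (t : ℝ) f) - (a₀ + jumpSum α Λ t₀ (t : ℝ) g)|)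
      ≤ (1 / 2) * ⨆ t : Set.Ico t₀ t₁, |f (t : ℝ) - g (t : ℝ)| :=
  stmt3_general a b b' t₀ t₁ a₀ ha hab hbb' α hrange hsmooth hbd Λ hΛ hcontr f g hf hg
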